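/- arXiv:1709.06624 — 3 statements merged into one kernel-verified Lean document; each statement's English description precedes it below -/
import Mathlib

section
/- For each 1 ≤ j ≤ n, let λ_{ij} ∈ ℕ with λ_{ij} ≥ 1 for 1 ≤ i ≤ n, and let Δ_j = conv{0, λ_{1j}e_1, …, λ_{nj}e_n} ⊆ ℝ^n, where e_i is the i-th standard basis vector. Let J ⊆ {1,…,n} be nonempty and Δ_J = ∑_{j∈J} Δ_j (Minkowski sum). Then every facet F of Δ_J that is not contained in a coordinate hyperplane {x : x_i = 0} has an inner normal vector η with η_i < 0 for all 1 ≤ i ≤ n. -/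
open Pointwise

/-! Write `x ∈ F` with `x i ≠ 0` as `x = ∑ j ∈ J, g j` with `g j ∈ Δ j`. Every `g j` minimizes
`η` on `Δ j`, and for a `j` with `g j i ≠ 0` this forces the vertex `λ_ij e_i` into the minimizing
face of the simplex `Δ j`. Comparing it with the vertex `0` gives `η i ≤ 0`. If `η i = 0`, the
minimum of `η` on `Δ j` is `0`, and comparing with the other vertices gives `η ≥ 0`, so `η = 0`;
but then `F = Δ_J`, which is full-dimensional. -/

theorem IsMinOn.of_finsetSum {κ E M F : Type*} [DecidableEq κ] [AddCommMonoid E]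
    [AddCommMonoid M] [PartialOrder M] [IsOrderedCancelAddMonoid M] [FunLike F E M]
    [AddMonoidHomClass F E M] {f : F} {S : κ → Set E} {J : Finset κ} {g : κ → E}
    (hg : ∀ j ∈ J, g j ∈ S j) (hmin : IsMinOn f (∑ j ∈ J, S j) (∑ j ∈ J, g j))
    {j : κ} (hj : j ∈ J) : IsMinOn f (S j) (g j) := by
  intro y hy
  have hmem : ∑ k ∈ J, Function.update g j y k ∈ ∑ k ∈ J, S k := by
    refine Set.finsetSum_mem_finsetSum _ _ _ fun k hk => ?_
    obtain rfl | hkj := eq_or_ne k j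
    · simpa using hy
    · simpa [hkj] using hg k hk
  have hle := hmin hmem
  rw [Set.mem_ofPred_eq, Finset.sum_update_of_mem hj,
    Finset.sum_eq_add_sum_sdiff_singleton_of_mem hj g, map_add, map_add] at hle
  exact le_of_add_le_add_right hle

theorem subset_finsetSum_of_zero_mem {κ E : Type*} [DecidableEq κ] [AddCommMonoid E]
    {S : κ → Set E} {J : Finset κ} (h₀ : ∀ j ∈ J, 0 ∈ S j) {j : κ} (hj : j ∈ J) :
    S j ⊆ ∑ k ∈ J, S k := by
  intro y hy
  refine (Set.mem_finsetSum _ _ _).2 ⟨Pi.single j y, fun {k} hk => ?_, by simp [hj]⟩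
  obtain rfl | hkj := eq_or_ne k j
  · simpa using hy
  · simpa [hkj] using h₀ k hk

variable {ι : Type*} [DecidableEq ι]

def cornerSimplex (v : ι → ℝ) : Set (ι → ℝ) :=
  convexHull ℝ (insert 0 (Set.range fun i => v i • Pi.single i 1))

namespace cornerSimplex

variable {v : ι → ℝ}

theorem zero_mem : (0 : ι → ℝ) ∈ cornerSimplex v :=
  subset_convexHull ℝ _ (Set.mem_insert _ _)

theorem vertex_mem (i : ι) : v i • Pi.single i 1 ∈ cornerSimplex v :=
  subset_convexHull ℝ _ (Set.mem_insert_of_mem _ ⟨i, rfl⟩)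

variable [Fintype ι]

theorem le_dotProduct {η y : ι → ℝ} {m : ℝ} (hm₀ : m ≤ 0) (hm : ∀ k, m ≤ v k * η k)
    (hy : y ∈ cornerSimplex v) : m ≤ η ⬝ᵥ y := by
  refine convexHull_min ?_ (convex_halfSpace_ge ?_ m) hy
  · rintro z (rfl | ⟨k, rfl⟩)
    · simpa using hm₀
    · simpa using hm k
  · exact ⟨dotProduct_add η, fun c x => dotProduct_smul c η x⟩

theorem nonneg_apply {y : ι → ℝ} {i : ι} (hv : 0 ≤ v i) (hy : y ∈ cornerSimplex v) :
    0 ≤ y i := by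
  simpa using le_dotProduct (η := Pi.single i 1) le_rfl
    (fun k => by obtain rfl | hk := eq_or_ne k i <;> simp [*]) hy

theorem isMinOn_vertex_of_apply_ne_zero {η y : ι → ℝ} {i : ι} (hv : 0 < v i)
    (hy : y ∈ cornerSimplex v) (hmin : IsMinOn (η ⬝ᵥ ·) (cornerSimplex v) y) (hyi : y i ≠ 0) :
    IsMinOn (η ⬝ᵥ ·) (cornerSimplex v) (v i • Pi.single i 1) := by
  set m := η ⬝ᵥ y
  have hm₀ : m ≤ 0 := by simpa using hmin zero_mem
  have hm : ∀ k, m ≤ v k * η k := fun k => by simpa [mul_comm] using hmin (vertex_mem k)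
  suffices v i * η i ≤ m from fun z hz => by simpa using this.trans (hmin hz)
  by_contra! hlt
  -- Tilting `η` in direction `i` until the `i`-th vertex also has value `m` keeps `m` a lower
  -- bound on the vertices, hence on the simplex; at `y` this forces `y i ≤ 0`.
  set t := (m - v i * η i) / v i
  have ht : t < 0 := div_neg_of_neg_of_pos (by linarith) hv
  have htilt : m ≤ (η + t • Pi.single i 1) ⬝ᵥ y := by
    refine le_dotProduct hm₀ (fun k => ?_) hy
    obtain rfl | hk := eq_or_ne k i
    · simp [t, mul_add, mul_div_cancel₀ _ hv.ne']
    · simpa [hk] using hm k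
  rw [add_dotProduct, smul_dotProduct, single_dotProduct, one_mul, smul_eq_mul,
    le_add_iff_nonneg_right] at htilt
  exact hyi ((nonpos_of_mul_nonneg_right htilt ht).antisymm (nonneg_apply hv.le hy))

theorem nonpos_of_isMinOn_vertex {η : ι → ℝ} {i : ι} (hv : 0 < v i)
    (hmin : IsMinOn (η ⬝ᵥ ·) (cornerSimplex v) (v i • Pi.single i 1)) : η i ≤ 0 := by
  have h₀ := hmin zero_mem
  simp only [Set.mem_ofPred_eq, dotProduct_smul, dotProduct_single, mul_one, smul_eq_mul,
    dotProduct_zero] at h₀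
  exact nonpos_of_mul_nonpos_right h₀ hv

theorem nonneg_of_isMinOn_vertex {η : ι → ℝ} {i : ι} (hv : ∀ k, 0 < v k)
    (hmin : IsMinOn (η ⬝ᵥ ·) (cornerSimplex v) (v i • Pi.single i 1)) (hi : η i = 0) :
    0 ≤ η := fun k => by
  have hk := hmin (vertex_mem k)
  simp only [Set.mem_ofPred_eq, dotProduct_smul, dotProduct_single, mul_one, smul_eq_mul, hi,
    mul_zero] at hk
  exact nonneg_of_mul_nonneg_right hk (hv k)

theorem affineSpan_eq_top (hv : ∀ i, v i ≠ 0) : affineSpan ℝ (cornerSimplex v) = ⊤ := by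
  rw [cornerSimplex, affineSpan_convexHull,
    AffineSubspace.affineSpan_eq_top_iff_vectorSpan_eq_top_of_nonempty ℝ _ _
      ⟨0, Set.mem_insert _ _⟩,
    vectorSpan_eq_span_vsub_set_right ℝ (Set.mem_insert _ _)]
  simp only [vsub_eq_sub, sub_zero, Set.image_id', Submodule.span_insert_zero]
  rw [eq_top_iff, ← (Pi.basisFun ℝ ι).span_eq, Submodule.span_le]
  rintro _ ⟨i, rfl⟩
  rw [Pi.basisFun_apply, SetLike.mem_coe, ← inv_smul_smul₀ (hv i) (Pi.single i 1 : ι → ℝ)]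
  exact Submodule.smul_mem _ _ (Submodule.subset_span ⟨i, rfl⟩)

variable {κ : Type*} [DecidableEq κ] {w : κ → ι → ℝ} {J : Finset κ}

theorem affineSpan_finsetSum_eq_top (hw : ∀ j i, w j i ≠ 0) (hJ : J.Nonempty) :
    affineSpan ℝ (∑ j ∈ J, cornerSimplex (w j)) = ⊤ :=
  let ⟨j, hj⟩ := hJ
  top_unique <| (affineSpan_eq_top (hw j)).ge.trans <| affineSpan_mono ℝ <|
    subset_finsetSum_of_zero_mem (fun _ _ => zero_mem) hj

theorem exists_isMinOn_vertex_of_isMinOn_finsetSum {η x : ι → ℝ} {i : ι}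
    (hw : ∀ j, 0 < w j i) (hx : x ∈ ∑ j ∈ J, cornerSimplex (w j))
    (hmin : IsMinOn (η ⬝ᵥ ·) (∑ j ∈ J, cornerSimplex (w j)) x) (hxi : x i ≠ 0) :
    ∃ j, IsMinOn (η ⬝ᵥ ·) (cornerSimplex (w j)) (w j i • Pi.single i 1) := by
  obtain ⟨g, hg, rfl⟩ := (Set.mem_finsetSum _ _ _).1 hx
  obtain ⟨j, hj, hgj⟩ :=
    Finset.exists_ne_zero_of_sum_ne_zero (by simpa [Finset.sum_apply] using hxi)
  have hgmin : IsMinOn (η ⬝ᵥ ·) (cornerSimplex (w j)) (g j) :=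
    IsMinOn.of_finsetSum (f := AddMonoidHom.mk' (η ⬝ᵥ ·) (dotProduct_add η))
      (fun j hj => hg hj) hmin hj
  exact ⟨j, isMinOn_vertex_of_apply_ne_zero (hw j) (hg hj) hgmin hgj⟩

end cornerSimplex

theorem stmt_8 {n : ℕ} (lam : Fin n → Fin n → ℕ) (hlam : ∀ i j, 1 ≤ lam i j)
    (Δ : Fin n → Set (Fin n → ℝ))
    (hΔ : ∀ j, Δ j = convexHull ℝ
      (insert (0 : Fin n → ℝ) (Set.range fun i => (lam i j : ℝ) • (Pi.single i 1 : Fin n → ℝ))))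
    (J : Finset (Fin n)) (hJ : J.Nonempty)
    (ΔJ : Set (Fin n → ℝ)) (hΔJ : ΔJ = ∑ j ∈ J, Δ j)
    (F : Set (Fin n → ℝ))
    -- `F` is a face of `ΔJ` cut out by a supporting hyperplane
    (hface : ∃ η₀ : Fin n → ℝ, ∃ c₀ : ℝ,
      F = {x ∈ ΔJ | ∑ i, η₀ i * x i = c₀} ∧ ∀ x ∈ ΔJ, c₀ ≤ ∑ i, η₀ i * x i)
    -- `F` is a facet: it has dimension `n - 1`
    (hdim : Module.finrank ℝ (affineSpan ℝ F).direction = n - 1)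
    -- `F` is not contained in any coordinate hyperplane
    (hcoord : ∀ i : Fin n, ¬ F ⊆ {x | x i = 0}) :
    ∃ η : Fin n → ℝ, ∃ c : ℝ,
      (∀ x ∈ F, ∑ i, η i * x i = c) ∧ (∀ x ∈ ΔJ, c ≤ ∑ i, η i * x i) ∧
      ∀ i, η i < 0 := by
  obtain ⟨η, c, hF, hmin⟩ := hface
  obtain rfl : Δ = fun j => cornerSimplex fun i => (lam i j : ℝ) := funext hΔ
  subst hΔJ
  have hlam_pos : ∀ j i, (0 : ℝ) < lam i j := fun j i => by exact_mod_cast hlam i j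
  have hvertex : ∀ i, ∃ j, IsMinOn (η ⬝ᵥ ·) (cornerSimplex fun k => (lam k j : ℝ))
      ((lam i j : ℝ) • Pi.single i 1) := fun i => by
    obtain ⟨x, hxF, hxi⟩ := Set.not_subset.mp (hcoord i)
    rw [hF] at hxF
    exact cornerSimplex.exists_isMinOn_vertex_of_isMinOn_finsetSum (hlam_pos · i) hxF.1
      (isMinOn_iff.2 fun z hz => hxF.2.trans_le (hmin z hz)) hxi
  have hle : ∀ i, η i ≤ 0 := fun i =>
    let ⟨j, hj⟩ := hvertex i
    cornerSimplex.nonpos_of_isMinOn_vertex (hlam_pos j i) hj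
  have hne : η ≠ 0 := by
    intro hη
    have htop := cornerSimplex.affineSpan_finsetSum_eq_top (fun j i => (hlam_pos j i).ne') hJ
    obtain ⟨j₀, -⟩ := hJ
    obtain ⟨x, hxF, -⟩ := Set.not_subset.mp (hcoord j₀)
    have hFΔ : F = ∑ j ∈ J, cornerSimplex fun i => (lam i j : ℝ) := by
      rw [hF] at hxF ⊢
      exact Set.sep_eq_self_iff_mem_true.2 fun y _ => by simpa [hη] using hxF.2
    rw [hFΔ, htop, AffineSubspace.direction_top, finrank_top, Module.finrank_fin_fun] at hdim
    have hn := j₀.pos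
    omega
  refine ⟨η, c, fun x hx => (hF ▸ hx).2, hmin,
    fun i => (hle i).lt_of_ne fun hi => hne ?_⟩
  obtain ⟨j, hj⟩ := hvertex i
  exact le_antisymm hle (cornerSimplex.nonneg_of_isMinOn_vertex (hlam_pos j) hj hi)
end

section
/- Let A ⊆ ℝ^n be a finite set with 0 ∉ conv(A), suppose conv(A) contains a point μ_i e_i with μ_i > 0 on each coordinate axis, and let Δ = conv{0, λ_1 e_1, …, λ_n e_n} where λ_i = min { μ ∈ ℕ : μ e_i ∈ conv(A) }. Let Q = conv(A) and Q⁰ = conv(A ∪ {0}). Then Q⁰ = Q ∪ Δ'; more precisely, for any point p ∈ Q⁰ with p ∉ Δ, we have p ∈ Q. -/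
/-!
Every point of `conv(A ∪ {0})` has the form `b • q` with `q ∈ Q` and `0 ≤ b ≤ 1`; since `A` has
nonnegative coordinates, so does `p = b • q`. Let `s = ∑ pᵢ / λᵢ`. If `s ≤ 1` then `p ∈ Δ`.
Otherwise `p / s` is a convex combination of the points `λᵢ eᵢ ∈ Q`, so `Q` meets the ray
through `q` at both `(b / s) • q` and `q`, and by convexity also at `b • q = p`, which lies between.
-/

open Set

section ConvexHullWeights

variable {ι E : Type*} [Fintype ι] [AddCommGroup E] [Module ℝ E]

theorem sum_smul_mem_convexHull_range (v : ι → E) {w : ι → ℝ} (hw : ∀ i, 0 ≤ w i)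
    (hw₁ : ∑ i, w i = 1) : ∑ i, w i • v i ∈ convexHull ℝ (range v) :=
  (convex_convexHull ℝ _).sum_mem (fun i _ ↦ hw i) hw₁
    fun i _ ↦ subset_convexHull ℝ _ (mem_range_self i)

/-- The missing weight `1 - ∑ wᵢ` is put on the vertex `0`. -/
theorem sum_smul_mem_convexHull_insert_zero_range (v : ι → E) {w : ι → ℝ} (hw : ∀ i, 0 ≤ w i)
    (hw₁ : ∑ i, w i ≤ 1) : ∑ i, w i • v i ∈ convexHull ℝ (insert 0 (range v)) := by
  let w' : Option ι → ℝ := fun o ↦ o.elim (1 - ∑ i, w i) w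
  let v' : Option ι → E := fun o ↦ o.elim 0 v
  have hw' : ∀ o, 0 ≤ w' o := fun
    | none => sub_nonneg.2 hw₁
    | some i => hw i
  have hsum : ∑ o, w' o = 1 := by simp [w', Fintype.sum_option]
  have hmem := sum_smul_mem_convexHull_range v' hw' hsum
  rw [Option.range_elim] at hmem
  simpa [w', v', Fintype.sum_option] using hmem

theorem exists_smul_of_mem_convexHull_insert_zero {s : Set E} (hs : s.Nonempty) {p : E}
    (hp : p ∈ convexHull ℝ (insert 0 s)) : ∃ b ∈ Icc (0 : ℝ) 1, ∃ q ∈ convexHull ℝ s, p = b • q := by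
  rw [convexHull_insert hs, mem_convexJoin] at hp
  obtain ⟨_, rfl, q, hq, a, b, ha, hb, hab, rfl⟩ := hp
  exact ⟨b, ⟨hb, by linarith⟩, q, hq, by simp⟩

/-- The points of `s` on the ray through `x` form an interval of scalars. -/
theorem Convex.smul_mem_of_smul_mem_of_le {s : Set E} (hs : Convex ℝ s) {x : E} {c t : ℝ}
    (hcx : c • x ∈ s) (hx : x ∈ s) (hct : c ≤ t) (ht : t ≤ 1) : t • x ∈ s := by
  have hray : Convex ℝ ((· • x) ⁻¹' s : Set ℝ) := hs.linear_preimage (LinearMap.toSpanSingleton ℝ E x)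
  exact (convex_iff_ordConnected.mp hray).out hcx (by simpa using hx) ⟨hct, ht⟩

end ConvexHullWeights

section AxisSimplex

variable {ι : Type*} [Fintype ι] [DecidableEq ι] {lam : ι → ℝ}

theorem sum_div_smul_smul_single (hlam : ∀ i, lam i ≠ 0) (x : ι → ℝ) :
    ∑ i, (x i / lam i) • lam i • (Pi.single i 1 : ι → ℝ) = x := by
  conv_rhs => rw [← Finset.univ_sum_single x]
  refine Finset.sum_congr rfl fun i _ ↦ ?_
  rw [smul_smul, div_mul_cancel₀ _ (hlam i), ← Pi.single_smul, smul_eq_mul, mul_one]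

theorem mem_convexHull_insert_zero_of_sum_div_le_one (hlam : ∀ i, 0 < lam i) {x : ι → ℝ}
    (hx : 0 ≤ x) (hsum : ∑ i, x i / lam i ≤ 1) :
    x ∈ convexHull ℝ (insert 0 (range fun i ↦ lam i • (Pi.single i 1 : ι → ℝ))) := by
  rw [← sum_div_smul_smul_single (fun i ↦ (hlam i).ne') x]
  exact sum_smul_mem_convexHull_insert_zero_range _ (fun i ↦ div_nonneg (hx i) (hlam i).le) hsum

theorem inv_sum_div_smul_mem_convexHull (hlam : ∀ i, 0 < lam i) {x : ι → ℝ} (hx : 0 ≤ x)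
    (hsum : 0 < ∑ i, x i / lam i) :
    (∑ i, x i / lam i)⁻¹ • x ∈ convexHull ℝ (range fun i ↦ lam i • (Pi.single i 1 : ι → ℝ)) := by
  set s := ∑ i, x i / lam i
  rw [← sum_div_smul_smul_single (fun i ↦ (hlam i).ne') x]
  simp only [Finset.smul_sum, smul_smul s⁻¹]
  refine sum_smul_mem_convexHull_range (fun i ↦ lam i • (Pi.single i 1 : ι → ℝ))
    (fun i ↦ mul_nonneg (inv_nonneg.2 hsum.le) (div_nonneg (hx i) (hlam i).le)) ?_
  rw [← Finset.mul_sum, inv_mul_cancel₀ hsum.ne']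

end AxisSimplex

theorem stmt_10_general {n : ℕ} (A : Set (Fin n → ℝ))
    (hAint : ∀ a ∈ A, ∀ i, ∃ k : ℕ, a i = (k : ℝ))
    (Q : Set (Fin n → ℝ)) (hQ : Q = convexHull ℝ A)
    (h0 : (0 : Fin n → ℝ) ∉ Q)
    (lam : Fin n → ℕ)
    (hlam : ∀ i, IsLeast {μ : ℕ | (μ : ℝ) • (Pi.single i 1 : Fin n → ℝ) ∈ Q} (lam i))
    (Δ : Set (Fin n → ℝ))
    (hΔ : Δ = convexHull ℝ
      (insert (0 : Fin n → ℝ) (Set.range fun i => (lam i : ℝ) • (Pi.single i 1 : Fin n → ℝ)))) :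
    ∀ p ∈ convexHull ℝ (A ∪ {0}), p ∉ Δ → p ∈ Q := by
  intro p hp hpΔ
  subst hQ hΔ
  have hlam_pos : ∀ i, 0 < (lam i : ℝ) := fun i ↦
    Nat.cast_pos.2 <| Nat.pos_of_ne_zero fun h ↦ h0 (by simpa [h] using (hlam i).1)
  have hA_nonneg : convexHull ℝ A ⊆ Ici 0 := convexHull_min
    (fun a ha i ↦ by obtain ⟨k, hk⟩ := hAint a ha i; simp [hk]) (convex_Ici 0)
  obtain rfl | hA := A.eq_empty_or_nonempty
  · obtain rfl : p = 0 := by simpa using hp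
    exact (hpΔ (subset_convexHull ℝ _ (mem_insert _ _))).elim
  rw [union_singleton] at hp
  obtain ⟨b, ⟨hb₀, hb₁⟩, q, hq, rfl⟩ := exists_smul_of_mem_convexHull_insert_zero hA hp
  have hp₀ : 0 ≤ b • q := smul_nonneg hb₀ (hA_nonneg hq)
  set s := ∑ i, (b • q) i / lam i
  have hs : 1 < s := not_le.1 fun h ↦
    hpΔ (mem_convexHull_insert_zero_of_sum_div_le_one hlam_pos hp₀ h)
  have hr : s⁻¹ • b • q ∈ convexHull ℝ A :=
    convexHull_min (range_subset_iff.2 fun i ↦ (hlam i).1) (convex_convexHull ℝ A)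
      (inv_sum_div_smul_mem_convexHull hlam_pos hp₀ (by linarith))
  rw [smul_smul] at hr
  exact (convex_convexHull ℝ A).smul_mem_of_smul_mem_of_le hr hq
    (mul_le_of_le_one_left hb₀ (inv_le_one_of_one_le₀ hs.le)) hb₁

theorem stmt_10 {n : ℕ} (A : Set (Fin n → ℝ)) (hAfin : A.Finite)
    (hAint : ∀ a ∈ A, ∀ i, ∃ k : ℕ, a i = (k : ℝ))
    (Q : Set (Fin n → ℝ)) (hQ : Q = convexHull ℝ A)
    (h0 : (0 : Fin n → ℝ) ∉ Q)
    (haxis : ∀ i : Fin n, ∃ μ : ℝ, 0 < μ ∧ μ • (Pi.single i 1 : Fin n → ℝ) ∈ Q)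
    (lam : Fin n → ℕ)
    (hlam : ∀ i, IsLeast {μ : ℕ | (μ : ℝ) • (Pi.single i 1 : Fin n → ℝ) ∈ Q} (lam i))
    (Δ : Set (Fin n → ℝ))
    (hΔ : Δ = convexHull ℝ
      (insert (0 : Fin n → ℝ) (Set.range fun i => (lam i : ℝ) • (Pi.single i 1 : Fin n → ℝ)))) :
    ∀ p ∈ convexHull ℝ (A ∪ {0}), p ∉ Δ → p ∈ Q :=
  stmt_10_general A hAint Q hQ h0 lam hlam Δ hΔ
end

section
/- Let Q ⊆ (ℝ_{≥0})^n be a compact convex set containing a point λ_n e_n with λ_n > 0, let Q⁰ = conv(Q ∪ {0}), and let σ, σ⁰ denote the upper envelope functions (with respect to the last coordinate) of Q and Q⁰ on their common projection π(Q) = π(Q⁰) to the first n−1 coordinates. Then σ⁰ = σ. -/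
/-- A point `(x, t)` of `conv (s ∪ {0})` is `b • z` with `z ∈ s` and `0 ≤ b ≤ 1`; moving it along
the segment towards `(0, c) ∈ s` lands at `(x, t + (1 - b) c) ∈ s`, which lies no lower. -/
theorem Convex.exists_le_snd_of_mem_convexHull_union_zero {E : Type*} [AddCommGroup E]
    [Module ℝ E] {s : Set (E × ℝ)} (hs : Convex ℝ s) {c : ℝ} (hc : 0 ≤ c) (hcs : (0, c) ∈ s)
    {x : E} {t : ℝ} (h : (x, t) ∈ convexHull ℝ (s ∪ {0})) :
    ∃ t', t ≤ t' ∧ (x, t') ∈ s := by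
  rw [Set.union_singleton, convexHull_insert ⟨_, hcs⟩, hs.convexHull_eq,
    convexJoin_singleton_left, Set.mem_iUnion₂] at h
  obtain ⟨⟨y, u⟩, hz, a, b, ha, hb, hab, hxt⟩ := h
  simp only [smul_zero, zero_add, Prod.smul_mk, smul_eq_mul, Prod.mk.injEq] at hxt
  obtain ⟨rfl, rfl⟩ := hxt
  obtain rfl : a = 1 - b := by linarith
  refine ⟨b * u + (1 - b) * c, by nlinarith, ?_⟩
  convert hs hz hcs hb ha (by ring) using 1
  simp

theorem stmt_11_general {m : ℕ} (Q : Set ((Fin m → ℝ) × ℝ))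
    (hQconv : Convex ℝ Q)
    (lamn : ℝ) (hlamn : 0 < lamn) (hlast : ((0 : Fin m → ℝ), lamn) ∈ Q)
    (Q0 : Set ((Fin m → ℝ) × ℝ)) (hQ0 : Q0 = convexHull ℝ (Q ∪ {0}))
    (σ σ0 : (Fin m → ℝ) → ℝ)
    (hσ : ∀ x ∈ Prod.fst '' Q, IsGreatest {t : ℝ | (x, t) ∈ Q} (σ x))
    (hσ0 : ∀ x ∈ Prod.fst '' Q, IsGreatest {t : ℝ | (x, t) ∈ Q0} (σ0 x)) :
    ∀ x ∈ Prod.fst '' Q, σ0 x = σ x := by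
  intro x hx
  obtain ⟨hσmem, hσub⟩ := hσ x hx
  obtain ⟨hσ0mem, hσ0ub⟩ := hσ0 x hx
  subst hQ0
  apply le_antisymm
  · obtain ⟨t, hle, ht⟩ :=
      hQconv.exists_le_snd_of_mem_convexHull_union_zero hlamn.le hlast hσ0mem
    exact hle.trans (hσub ht)
  · exact hσ0ub (subset_convexHull ℝ _ (Or.inl hσmem))

/-- `ℝ^n` modeled as `ℝ^{n-1} × ℝ`, with `π = Prod.fst` the projection onto the
first `n-1` coordinates and the last coordinate `Prod.snd`. -/
theorem stmt_11 {m : ℕ} (Q : Set ((Fin m → ℝ) × ℝ))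
    (hQcomp : IsCompact Q) (hQconv : Convex ℝ Q)
    (hQnonneg : ∀ q ∈ Q, (∀ i, 0 ≤ q.1 i) ∧ 0 ≤ q.2)
    (lamn : ℝ) (hlamn : 0 < lamn) (hlast : ((0 : Fin m → ℝ), lamn) ∈ Q)
    (Q0 : Set ((Fin m → ℝ) × ℝ)) (hQ0 : Q0 = convexHull ℝ (Q ∪ {0}))
    (hproj : Prod.fst '' Q = Prod.fst '' Q0)
    (σ σ0 : (Fin m → ℝ) → ℝ)
    (hσ : ∀ x ∈ Prod.fst '' Q, IsGreatest {t : ℝ | (x, t) ∈ Q} (σ x))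
    (hσ0 : ∀ x ∈ Prod.fst '' Q, IsGreatest {t : ℝ | (x, t) ∈ Q0} (σ0 x)) :
    ∀ x ∈ Prod.fst '' Q, σ0 x = σ x :=
  stmt_11_general Q hQconv lamn hlamn hlast Q0 hQ0 σ σ0 hσ hσ0
end
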